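/- arXiv:2108.06452 — 6 statements merged into one kernel-verified Lean document; each statement's English description precedes it below -/
import Mathlib

section
/- Let X be a measurable space, n ≥ 1, K ≥ 1, let s : Fin n → X → ℝ be measurable functions with values in [0,1], let α : Fin n → ℝ be a probability vector, and define f x = ∑ i, α i * s i x and, for ω : Fin K → Fin n, g_ω x = (1/K) * ∑ j, s (ω j) x. Let D be a probability measure on X × ({0,1} with the discrete σ-algebra), let τ ∈ (0,1), and for a function F : X → ℝ define the margin m_F(x,y) = (y − τ) * (F x − τ). Then for every θ > 0: D{(x,y) : m_f(x,y) ≤ 0} ≤ ∫ D{(x,y) : m_{g_ω}(x,y) ≤ θ/2} dμ(ω) + exp(−K θ² / 2), where μ is the K-fold product of the probability mass function α on Fin n. -/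
/-!
For a fixed labelled point `(x, y)` put `c = y - τ`. The margin of `g_ω` is the empirical mean of
the `K` i.i.d. samples `c * s (ω j) x`, whose expectation is the margin of `f`, up to the common
shift `- c * τ`. Since `|c| ≤ 1`, these samples range over an interval of length at most one, so
Hoeffding's inequality bounds the probability that `g_ω` has margin above `θ / 2` where `f` has
nonpositive margin by `exp (-K θ² / 2)`. Integrating this pointwise bound against `D` and swapping
the order of integration (Tonelli) gives the theorem.
-/

open MeasureTheory ProbabilityTheory Set
open scoped ENNReal

section Hoeffding

variable {Ω : Type*} [MeasurableSpace Ω] (ν : Measure Ω) [IsProbabilityMeasure ν]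
  {v : Ω → ℝ} {a : ℝ}

lemma hasSubgaussianMGF_eval_sub_integral (hv : Measurable v)
    (hva : ∀ x, v x ∈ Icc a (a + 1)) {ι : Type*} [Fintype ι] (j : ι) :
    HasSubgaussianMGF (fun ω : ι → Ω => v (ω j) - ∫ x, v x ∂ν) (1 / 4)
      (Measure.pi fun _ => ν) := by
  have h := hasSubgaussianMGF_of_mem_Icc (μ := Measure.pi fun _ : ι => ν)
    (X := fun ω => v (ω j)) (hv.comp (measurable_pi_apply j)).aemeasurable
    (ae_of_all _ fun ω => hva (ω j))
  rw [integral_comp_eval hv.aestronglyMeasurable, add_sub_cancel_left, nnnorm_one] at h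
  convert h using 2
  norm_num

theorem measure_pi_sum_sub_integral_ge_le (hv : Measurable v)
    (hva : ∀ x, v x ∈ Icc a (a + 1)) (K : ℕ) {ε : ℝ} (hε : 0 ≤ ε) :
    Measure.pi (fun _ : Fin K => ν) {ω | ε ≤ ∑ j, (v (ω j) - ∫ x, v x ∂ν)} ≤
      ENNReal.ofReal (Real.exp (-2 * ε ^ 2 / K)) := by
  have hindep : iIndepFun (fun (j : Fin K) (ω : Fin K → Ω) => v (ω j) - ∫ x, v x ∂ν)
      (Measure.pi fun _ => ν) :=
    iIndepFun_pi (X := fun _ x => v x - ∫ x, v x ∂ν) fun _ => (hv.sub_const _).aemeasurable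
  have h := HasSubgaussianMGF.measure_sum_ge_le_of_iIndepFun hindep (s := Finset.univ)
    (fun j _ => hasSubgaussianMGF_eval_sub_integral ν hv hva j) hε
  rw [← ofReal_measureReal]
  refine ENNReal.ofReal_le_ofReal (h.trans_eq ?_)
  congr 1
  simp only [Finset.sum_const, Finset.card_univ, Fintype.card_fin, nsmul_eq_mul, NNReal.coe_mul,
    NNReal.coe_natCast, NNReal.coe_div, NNReal.coe_one, NNReal.coe_ofNat]
  ring

theorem measure_pi_integral_add_lt_mean_le (hv : Measurable v)
    (hva : ∀ x, v x ∈ Icc a (a + 1)) {K : ℕ} (hK : 0 < K) {ε : ℝ} (hε : 0 ≤ ε) :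
    Measure.pi (fun _ : Fin K => ν)
        {ω | ∫ x, v x ∂ν + ε < (K : ℝ)⁻¹ * ∑ j, v (ω j)} ≤
      ENNReal.ofReal (Real.exp (-2 * K * ε ^ 2)) := by
  have hK' : (0 : ℝ) < K := Nat.cast_pos.2 hK
  calc _ ≤ Measure.pi (fun _ : Fin K => ν)
        {ω | K * ε ≤ ∑ j, (v (ω j) - ∫ x, v x ∂ν)} := by
        refine measure_mono fun ω hω => ?_
        simp only [mem_ofPred_eq, Finset.sum_sub_distrib, Finset.sum_const, Finset.card_univ,
          Fintype.card_fin, nsmul_eq_mul] at hω ⊢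
        rw [lt_inv_mul_iff₀ hK'] at hω
        linarith
    _ ≤ _ := measure_pi_sum_sub_integral_ge_le ν hv hva K (by positivity)
    _ = _ := by
        congr 2
        field_simp

end Hoeffding

section Discrete

variable {ι : Type*} [Fintype ι] [MeasurableSpace ι] {α : ι → ℝ}

lemma isProbabilityMeasure_sum_ofReal_smul_dirac (hα0 : ∀ i, 0 ≤ α i)
    (hα1 : ∑ i, α i = 1) :
    IsProbabilityMeasure (∑ i, ENNReal.ofReal (α i) • Measure.dirac i) := by
  constructor
  simp only [Measure.coe_finsetSum, Finset.sum_apply, Measure.smul_apply, measure_univ,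
    smul_eq_mul, mul_one]
  rw [← ENNReal.ofReal_sum_of_nonneg fun i _ => hα0 i, hα1, ENNReal.ofReal_one]

lemma integral_sum_ofReal_smul_dirac [MeasurableSingletonClass ι] (hα0 : ∀ i, 0 ≤ α i)
    (v : ι → ℝ) :
    ∫ i, v i ∂(∑ i, ENNReal.ofReal (α i) • Measure.dirac i) = ∑ i, α i * v i := by
  rw [integral_finsetSum_measure fun i _ =>
    (integrable_dirac enorm_lt_top).smul_measure ENNReal.ofReal_ne_top]
  simp [integral_smul_measure, integral_dirac, ENNReal.toReal_ofReal (hα0 _)]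

end Discrete

theorem measure_le_lintegral_measure_prodMk_add {Ω P : Type*} [MeasurableSpace Ω]
    [MeasurableSpace P] (μ : Measure Ω) [IsProbabilityMeasure μ] (D : Measure P)
    [IsProbabilityMeasure D] {S : Set (Ω × P)} (hS : MeasurableSet S) {B : Set P}
    {δ : ℝ≥0∞}
    (hB : ∀ p ∈ B, μ ((fun ω => (ω, p)) ⁻¹' S)ᶜ ≤ δ) :
    D B ≤ ∫⁻ ω, D (Prod.mk ω ⁻¹' S) ∂μ + δ := by
  have hcover : ∀ p ∈ B, 1 ≤ μ ((fun ω => (ω, p)) ⁻¹' S) + δ := fun p hp => by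
    rw [← measure_univ (μ := μ), ← measure_add_measure_compl (measurable_prodMk_right hS)]
    gcongr
    exact hB p hp
  calc D B ≤ ∫⁻ p, μ ((fun ω => (ω, p)) ⁻¹' S) + δ ∂D :=
        meas_le_lintegral₀ ((measurable_measure_prodMk_right hS).add_const δ).aemeasurable hcover
    _ = ∫⁻ ω, D (Prod.mk ω ⁻¹' S) ∂μ + δ := by
        rw [lintegral_add_right _ measurable_const, lintegral_const, measure_univ, mul_one,
          ← Measure.prod_apply_symm hS, Measure.prod_apply hS]

lemma mul_mem_Icc_min_zero_add_one {c x : ℝ} (hc : c ∈ Icc (-1) 1) (hx : x ∈ Icc 0 1) :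
    c * x ∈ Icc (min 0 c) (min 0 c + 1) := by
  obtain ⟨hc0, hc1⟩ := hc
  obtain ⟨hx0, hx1⟩ := hx
  rcases le_total 0 c with h | h
  · rw [min_eq_left h]; constructor <;> nlinarith
  · rw [min_eq_right h]; constructor <;> nlinarith

theorem adaGNN_margin_true_error_step_general
    {X : Type*} [MeasurableSpace X]
    (n K : ℕ) (hK : 1 ≤ K)
    (s : Fin n → X → ℝ) (hmeas : ∀ i, Measurable (s i))
    (hs : ∀ i x, s i x ∈ Set.Icc (0 : ℝ) 1)
    (α : Fin n → ℝ) (hα0 : ∀ i, 0 ≤ α i) (hα1 : ∑ i, α i = 1)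
    (f : X → ℝ) (hf : ∀ x, f x = ∑ i, α i * s i x)
    (g : (Fin K → Fin n) → X → ℝ)
    (hg : ∀ ω x, g ω x = (1 / (K : ℝ)) * ∑ j, s (ω j) x)
    (D : Measure (X × Fin 2)) [IsProbabilityMeasure D]
    (τ : ℝ) (hτ : τ ∈ Set.Ioo (0 : ℝ) 1)
    (margin : (X → ℝ) → X × Fin 2 → ℝ)
    (hmargin : ∀ F p, margin F p = (((p.2 : ℕ) : ℝ) - τ) * (F p.1 - τ))
    (μ : Measure (Fin K → Fin n))
    (hμ : μ = Measure.pi fun _ : Fin K =>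
      ∑ i : Fin n, ENNReal.ofReal (α i) • Measure.dirac i)
    (θ : ℝ) (hθ : 0 < θ) :
    D {p | margin f p ≤ 0} ≤
      (∫⁻ ω, D {p | margin (g ω) p ≤ θ / 2} ∂μ) +
        ENNReal.ofReal (Real.exp (-(K * θ ^ 2) / 2)) := by
  set ν : Measure (Fin n) := ∑ i, ENNReal.ofReal (α i) • Measure.dirac i
  have := isProbabilityMeasure_sum_ofReal_smul_dirac hα0 hα1
  subst hμ
  have hS : MeasurableSet
      {q : (Fin K → Fin n) × (X × Fin 2) | margin (g q.1) q.2 ≤ θ / 2} := by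
    refine measurableSet_le (measurable_from_prod_countable_right fun ω => ?_) measurable_const
    simp only [hmargin, hg]
    fun_prop
  refine measure_le_lintegral_measure_prodMk_add _ D hS fun p hp => ?_
  set c : ℝ := ((p.2 : ℕ) : ℝ) - τ
  have hc : c ∈ Icc (-1) 1 := by
    have : ((p.2 : ℕ) : ℝ) ≤ 1 := by exact_mod_cast Nat.lt_succ_iff.mp p.2.isLt
    constructor <;> linarith [hτ.1, hτ.2, Nat.cast_nonneg (α := ℝ) (p.2 : ℕ)]
  have hmean : ∫ i, c * s i p.1 ∂ν = c * f p.1 := by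
    rw [integral_sum_ofReal_smul_dirac hα0, hf, Finset.mul_sum]
    exact Finset.sum_congr rfl fun i _ => by ring
  have hmargin_sub : ∀ ω, margin (g ω) p - margin f p =
      (K : ℝ)⁻¹ * ∑ j, c * s (ω j) p.1 - c * f p.1 := fun ω => by
    rw [hmargin, hmargin, hg, ← Finset.mul_sum]
    ring
  calc Measure.pi (fun _ => ν) {ω | ¬ margin (g ω) p ≤ θ / 2}
      ≤ Measure.pi (fun _ => ν)
          {ω | ∫ i, c * s i p.1 ∂ν + θ / 2 < (K : ℝ)⁻¹ * ∑ j, c * s (ω j) p.1} :=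
        measure_mono fun ω (hω : ¬ margin (g ω) p ≤ θ / 2) => by
          show _ + θ / 2 < _
          linarith [hmean, hmargin_sub ω, hp.out]
    _ ≤ ENNReal.ofReal (Real.exp (-2 * K * (θ / 2) ^ 2)) :=
        measure_pi_integral_add_lt_mean_le ν (measurable_of_finite _)
          (fun i => mul_mem_Icc_min_zero_add_one hc (hs i p.1)) hK (by positivity)
    _ = ENNReal.ofReal (Real.exp (-(K * θ ^ 2) / 2)) := by ring_nf

/-- First step of the margin-based generalization analysis: the `D`-probability of a
nonpositive margin of the convex combination `f` is bounded by the expected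
`D`-probability of a margin at most `θ/2` for a random `K`-fold average `g_ω`
(indices drawn i.i.d. from the probability mass function `α`), plus a Hoeffding
concentration term.  Labels take values in `{0,1}` (coded as `Fin 2` with the
discrete σ-algebra) and the margin of `F` at `(x,y)` is `(y - τ) * (F x - τ)`. -/
theorem adaGNN_margin_true_error_step
    {X : Type*} [MeasurableSpace X]
    (n K : ℕ) (hn : 1 ≤ n) (hK : 1 ≤ K)
    (s : Fin n → X → ℝ) (hmeas : ∀ i, Measurable (s i))
    (hs : ∀ i x, s i x ∈ Set.Icc (0 : ℝ) 1)
    (α : Fin n → ℝ) (hα0 : ∀ i, 0 ≤ α i) (hα1 : ∑ i, α i = 1)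
    (f : X → ℝ) (hf : ∀ x, f x = ∑ i, α i * s i x)
    (g : (Fin K → Fin n) → X → ℝ)
    (hg : ∀ ω x, g ω x = (1 / (K : ℝ)) * ∑ j, s (ω j) x)
    (D : Measure (X × Fin 2)) [IsProbabilityMeasure D]
    (τ : ℝ) (hτ : τ ∈ Set.Ioo (0 : ℝ) 1)
    (margin : (X → ℝ) → X × Fin 2 → ℝ)
    (hmargin : ∀ F p, margin F p = (((p.2 : ℕ) : ℝ) - τ) * (F p.1 - τ))
    (μ : Measure (Fin K → Fin n))
    (hμ : μ = Measure.pi fun _ : Fin K =>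
      ∑ i : Fin n, ENNReal.ofReal (α i) • Measure.dirac i)
    (θ : ℝ) (hθ : 0 < θ) :
    D {p | margin f p ≤ 0} ≤
      (∫⁻ ω, D {p | margin (g ω) p ≤ θ / 2} ∂μ) +
        ENNReal.ofReal (Real.exp (-(K * θ ^ 2) / 2)) :=
  adaGNN_margin_true_error_step_general n K hK s hmeas hs α hα0 hα1 f hf g hg D τ hτ margin hmargin
    μ hμ θ hθ
end

section
/- Let I be a nonempty finite index set, let w : I → ℝ with w i > 0 for all i, and let u : I → ℝ with u i ∈ {−1, 1} for all i. Let W = ∑ i, w i, let ε = (∑ i with u i = −1, w i) / W, and assume 0 < ε < 1. Then the function φ : ℝ → ℝ defined by φ(a) = ∑ i, w i * exp(−a * u i) attains its global minimum over ℝ exactly at a* = (1/2) * ln((1 − ε)/ε), and the minimum value is φ(a*) = 2 * √(ε * (1 − ε)) * W. -/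
/-!
Splitting the sum according to the sign of `u i` turns the loss into
`φ a = A e^a + B e^{-a}` with `A = ε W` and `B = (1 - ε) W`. The two summands have the constant
product `A B`, so by AM-GM `φ a ≥ 2 √(A B) = 2 √(ε (1 - ε)) W`, with equality exactly when
`A e^a = B e^{-a}`, i.e. `e^{2a} = (1 - ε) / ε`.
-/

open Real Finset

lemma sum_mul_comp_of_sign {I : Type*} [Fintype I] (w u : I → ℝ)
    (hu : ∀ i, u i = -1 ∨ u i = 1) (f : ℝ → ℝ) :
    ∑ i, w i * f (u i) =
      (∑ i ∈ univ.filter fun i => u i = -1, w i) * f (-1) +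
        (∑ i ∈ univ.filter fun i => ¬u i = -1, w i) * f 1 := by
  rw [← sum_filter_add_sum_filter_not univ (fun i => u i = -1), sum_mul, sum_mul]
  congr 1
  · refine sum_congr rfl fun i hi => ?_
    rw [(mem_filter.mp hi).2]
  · refine sum_congr rfl fun i hi => ?_
    rw [(hu i).resolve_left (mem_filter.mp hi).2]

lemma two_mul_le_add_of_mul_eq_sq {x y c : ℝ} (hx : 0 ≤ x) (hy : 0 ≤ y)
    (h : x * y = c ^ 2) : 2 * c ≤ x + y := by
  nlinarith [sq_nonneg (x - y)]

lemma add_eq_two_mul_iff_of_mul_eq_sq {x y c : ℝ} (hx : 0 ≤ x) (hc : 0 ≤ c)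
    (h : x * y = c ^ 2) : x + y = 2 * c ↔ x = y := by
  refine ⟨fun hsum => ?_, fun hxy => ?_⟩
  · have hsq : (x - y) ^ 2 = 0 := by linear_combination (x + y + 2 * c) * hsum - 4 * h
    exact sub_eq_zero.mp (pow_eq_zero_iff two_ne_zero |>.mp hsq)
  · subst hxy
    have hxc : x = c := (sq_eq_sq₀ hx hc).mp (by rw [sq, h])
    rw [hxc, two_mul]

section ExpSum

variable {A B : ℝ}

lemma mul_exp_mul_mul_exp_neg (hA : 0 ≤ A) (hB : 0 ≤ B) (a : ℝ) :
    A * exp a * (B * exp (-a)) = √(A * B) ^ 2 := by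
  rw [sq_sqrt (mul_nonneg hA hB), mul_mul_mul_comm, ← exp_add, add_neg_cancel, exp_zero, mul_one]

lemma two_mul_sqrt_mul_le_mul_exp_add_mul_exp_neg (hA : 0 ≤ A) (hB : 0 ≤ B) (a : ℝ) :
    2 * √(A * B) ≤ A * exp a + B * exp (-a) :=
  two_mul_le_add_of_mul_eq_sq (by positivity) (by positivity)
    (mul_exp_mul_mul_exp_neg hA hB a)

lemma mul_exp_eq_mul_exp_neg_iff (hA : 0 < A) (hB : 0 < B) (a : ℝ) :
    A * exp a = B * exp (-a) ↔ a = 1 / 2 * log (B / A) := by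
  have hexp : exp (2 * a) = exp a * exp a := by rw [two_mul, exp_add]
  calc A * exp a = B * exp (-a) ↔ exp (2 * a) = B / A := by
        rw [hexp, eq_div_iff hA.ne', exp_neg, eq_mul_inv_iff_mul_eq₀ (exp_pos a).ne']
        ring_nf
    _ ↔ 2 * a = log (B / A) := by rw [← exp_eq_exp (x := 2 * a), exp_log (div_pos hB hA)]
    _ ↔ a = 1 / 2 * log (B / A) := by constructor <;> intro h <;> linarith

lemma mul_exp_add_mul_exp_neg_eq_iff (hA : 0 < A) (hB : 0 < B) (a : ℝ) :
    A * exp a + B * exp (-a) = 2 * √(A * B) ↔ a = 1 / 2 * log (B / A) := by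
  rw [add_eq_two_mul_iff_of_mul_eq_sq (by positivity) (sqrt_nonneg _)
    (mul_exp_mul_mul_exp_neg hA.le hB.le a), mul_exp_eq_mul_exp_neg_iff hA hB]

end ExpSum

theorem adaGNN_adaboost_optimal_coefficient_general
    {I : Type*} [Fintype I]
    (w u : I → ℝ) (hw : ∀ i, 0 < w i) (hu : ∀ i, u i = -1 ∨ u i = 1)
    (W ε aStar : ℝ) (hW : W = ∑ i, w i)
    (hε : ε = (∑ i ∈ Finset.univ.filter fun i => u i = -1, w i) / W)
    (hε0 : 0 < ε) (hε1 : ε < 1)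
    (haStar : aStar = (1 / 2) * Real.log ((1 - ε) / ε))
    (φ : ℝ → ℝ) (hφ : ∀ a, φ a = ∑ i, w i * Real.exp (-a * u i)) :
    (∀ a, φ aStar ≤ φ a) ∧
      (∀ a, φ a = φ aStar → a = aStar) ∧
      φ aStar = 2 * Real.sqrt (ε * (1 - ε)) * W := by
  have hW0 : W ≠ 0 := fun h => hε0.ne' (by rw [hε, h, div_zero])
  have hWpos : 0 < W := (hW ▸ sum_nonneg fun i _ => (hw i).le).lt_of_ne' hW0
  have hA : (∑ i ∈ univ.filter fun i => u i = -1, w i) = ε * W := by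
    rw [hε, div_mul_cancel₀ _ hW0]
  have hB : (∑ i ∈ univ.filter fun i => ¬u i = -1, w i) = (1 - ε) * W := by
    linarith [sum_filter_add_sum_filter_not univ (fun i => u i = -1) w]
  have hφ_two_terms : ∀ a, φ a = ε * W * exp a + (1 - ε) * W * exp (-a) := fun a => by
    rw [hφ, sum_mul_comp_of_sign w u hu (fun t => exp (-a * t)), hA, hB]
    simp only [mul_neg, mul_one, neg_neg]
  have hεW : 0 < ε * W := mul_pos hε0 hWpos
  have h1εW : 0 < (1 - ε) * W := mul_pos (by linarith) hWpos
  have hratio : (1 - ε) * W / (ε * W) = (1 - ε) / ε := mul_div_mul_right _ _ hW0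
  have hmin : φ aStar = 2 * √(ε * W * ((1 - ε) * W)) := by
    rw [hφ_two_terms, mul_exp_add_mul_exp_neg_eq_iff hεW h1εW, hratio, haStar]
  refine ⟨fun a => ?_, fun a ha => ?_, ?_⟩
  · rw [hmin, hφ_two_terms]
    exact two_mul_sqrt_mul_le_mul_exp_add_mul_exp_neg hεW.le h1εW.le a
  · rwa [hmin, hφ_two_terms, mul_exp_add_mul_exp_neg_eq_iff hεW h1εW, hratio, ← haStar] at ha
  · rw [hmin, show ε * W * ((1 - ε) * W) = ε * (1 - ε) * (W * W) by ring,
      sqrt_mul (by nlinarith), sqrt_mul_self hWpos.le, mul_assoc]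

/-- The weighted exponential loss `φ a = ∑ i, w i * exp (-a * u i)` (with positive
weights `w i` and agreement indicators `u i ∈ {-1, 1}`) attains its global minimum
over `ℝ` exactly at `a* = (1/2) * log ((1 - ε)/ε)`, where `ε` is the weighted
misclassification error, and the minimum value is `2 * √(ε * (1 - ε)) * W`. -/
theorem adaGNN_adaboost_optimal_coefficient
    {I : Type*} [Fintype I] [Nonempty I]
    (w u : I → ℝ) (hw : ∀ i, 0 < w i) (hu : ∀ i, u i = -1 ∨ u i = 1)
    (W ε aStar : ℝ) (hW : W = ∑ i, w i)
    (hε : ε = (∑ i ∈ Finset.univ.filter fun i => u i = -1, w i) / W)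
    (hε0 : 0 < ε) (hε1 : ε < 1)
    (haStar : aStar = (1 / 2) * Real.log ((1 - ε) / ε))
    (φ : ℝ → ℝ) (hφ : ∀ a, φ a = ∑ i, w i * Real.exp (-a * u i)) :
    (∀ a, φ aStar ≤ φ a) ∧
      (∀ a, φ a = φ aStar → a = aStar) ∧
      φ aStar = 2 * Real.sqrt (ε * (1 - ε)) * W :=
  adaGNN_adaboost_optimal_coefficient_general w u hw hu W ε aStar hW hε hε0 hε1 haStar φ hφ
end

section
/- Let m ≥ 1 and T ≥ 1 be natural numbers and let u : Fin T → Fin m → ℝ satisfy u t i ∈ {−1, 1} for all t, i. Define weights D : Fin (T+1) → Fin m → ℝ recursively by D 0 i = 1/m and D (t+1) i = D t i * exp(−α t * u t i) / Z t, where ε t = ∑ i with u t i = −1, D t i, assumed to satisfy 0 < ε t < 1 for every t, α t = (1/2) * ln((1 − ε t)/(ε t)), and Z t = ∑ i, D t i * exp(−α t * u t i). Then the fraction of indices i ∈ Fin m with ∑ t, α t * u t i ≤ 0 is at most ∏ t, 2 * √(ε t * (1 − ε t)). -/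
/-!
Unrolling the weight recursion gives `D T i * ∏ t, Z t = exp (-∑ t, α t * u t i) / m`; since the
weights stay normalized, `∏ t, Z t` is the average exponential loss of the combined classifier,
which dominates its training error because `exp (-x) ≥ 1` for `x ≤ 0`. With `D t` normalized,
`Z t = ε t * exp (α t) + (1 - ε t) * exp (-α t)`, and the choice of `α t` makes this
`2 * √(ε t * (1 - ε t))`.
-/

open Finset Real

theorem Fin.apply_last_eq_mul_prod {M : Type*} [CommMonoid M] :
    ∀ {n : ℕ} (f : Fin (n + 1) → M) (c : Fin n → M),
      (∀ t, f t.succ = f t.castSucc * c t) → f (Fin.last n) = f 0 * ∏ t, c t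
  | 0, f, _, _ => by simp
  | n + 1, f, c, h => by
    rw [Fin.prod_univ_castSucc, ← mul_assoc, ← Fin.succ_last, h]
    congr 1
    exact Fin.apply_last_eq_mul_prod (f ∘ Fin.castSucc) (c ∘ Fin.castSucc) fun t => h t.castSucc

theorem card_filter_nonpos_le_sum_exp_neg {ι : Type*} (s : Finset ι) (f : ι → ℝ) :
    (#{i ∈ s | f i ≤ 0} : ℝ) ≤ ∑ i ∈ s, exp (-f i) := by
  rw [natCast_card_filter]
  gcongr with i
  split_ifs with hfi
  · exact one_le_exp (neg_nonneg.mpr hfi)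
  · positivity

theorem sum_mul_exp_neg_mul_sign {ι : Type*} [Fintype ι] {p u : ι → ℝ}
    (hu : ∀ i, u i = -1 ∨ u i = 1) (hp : ∑ i, p i = 1) (a : ℝ) :
    ∑ i, p i * exp (-a * u i) =
      exp a * ∑ i with u i = -1, p i + exp (-a) * (1 - ∑ i with u i = -1, p i) := by
  have hcompl : ∑ i with ¬u i = -1, p i = 1 - ∑ i with u i = -1, p i := by
    linarith [sum_filter_add_sum_filter_not univ (fun i => u i = -1) p]
  rw [← sum_filter_add_sum_filter_not univ (fun i => u i = -1), ← hcompl, mul_sum, mul_sum]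
  congr 1 <;> refine sum_congr rfl fun i hi => ?_
  · rw [(mem_filter.mp hi).2]; ring_nf
  · rw [((hu i).resolve_left (mem_filter.mp hi).2)]; ring_nf

theorem exp_half_log_odds_mul_add {ε : ℝ} (hε0 : 0 < ε) (hε1 : ε < 1) :
    exp ((1 / 2) * log ((1 - ε) / ε)) * ε + exp (-((1 / 2) * log ((1 - ε) / ε))) * (1 - ε) =
      2 * √(ε * (1 - ε)) := by
  have hε1' : 0 < 1 - ε := by linarith
  have hodds : exp ((1 / 2) * log ((1 - ε) / ε)) = √((1 - ε) / ε) := by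
    rw [one_div_mul_eq_div, exp_half, exp_log (div_pos hε1' hε0)]
  rw [exp_neg, hodds, ← sqrt_inv, inv_div]
  have hmul : ∀ {x y : ℝ}, 0 < y → √(x / y) * y = √(x * y) := fun {x y} hy => by
    nth_rw 2 [← sqrt_mul_self hy.le]
    rw [← sqrt_mul' _ (mul_self_nonneg y)]
    congr 1
    field_simp
  rw [hmul hε0, hmul hε1', mul_comm (1 - ε)]
  ring

theorem adaGNN_adaboost_training_error_bound_general
    (m T : ℕ) (hm : 1 ≤ m)
    (u : Fin T → Fin m → ℝ) (hu : ∀ t i, u t i = -1 ∨ u t i = 1)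
    (D : Fin (T + 1) → Fin m → ℝ)
    (ε α Z : Fin T → ℝ)
    (hD0 : ∀ i, D 0 i = 1 / m)
    (hε : ∀ t, ε t = ∑ i ∈ Finset.univ.filter fun i => u t i = -1, D t.castSucc i)
    (hε0 : ∀ t, 0 < ε t) (hε1 : ∀ t, ε t < 1)
    (hα : ∀ t, α t = (1 / 2) * Real.log ((1 - ε t) / ε t))
    (hZ : ∀ t, Z t = ∑ i, D t.castSucc i * Real.exp (-(α t) * u t i))
    (hD : ∀ t i, D t.succ i = D t.castSucc i * Real.exp (-(α t) * u t i) / Z t) :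
    ((Finset.univ.filter fun i : Fin m => (∑ t, α t * u t i) ≤ 0).card : ℝ) / m ≤
      ∏ t, 2 * Real.sqrt (ε t * (1 - ε t)) := by
  have hm0 : (0 : ℝ) < m := by exact_mod_cast hm
  have hZ_eq : ∀ t, ∑ i, D t.castSucc i = 1 → Z t = 2 * √(ε t * (1 - ε t)) := fun t hsum => by
    rw [hZ, sum_mul_exp_neg_mul_sign (hu t) hsum, ← hε, hα]
    exact exp_half_log_odds_mul_add (hε0 t) (hε1 t)
  have hZ_pos : ∀ t, ∑ i, D t.castSucc i = 1 → 0 < Z t := fun t hsum => by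
    rw [hZ_eq t hsum]
    have := mul_pos (hε0 t) (sub_pos.mpr (hε1 t))
    positivity
  have hsum : ∀ t, ∑ i, D t i = 1 := by
    intro t
    induction t using Fin.induction with
    | zero => simp only [hD0, sum_const, card_univ, Fintype.card_fin, nsmul_eq_mul]; field_simp
    | succ t ih => simp_rw [hD, ← sum_div, ← hZ, div_self (hZ_pos t ih).ne']
  have hZ_prod : ∏ t, Z t = ∏ t, 2 * √(ε t * (1 - ε t)) :=
    prod_congr rfl fun t _ => hZ_eq t (hsum _)
  have hD_last : ∀ i, D (Fin.last T) i * ∏ t, Z t = exp (-∑ t, α t * u t i) / m := fun i => by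
    rw [Fin.apply_last_eq_mul_prod (D · i) (fun t => exp (-α t * u t i) / Z t)
      fun t => by simp only [hD, mul_div_assoc], hD0, prod_div_distrib, ← exp_sum]
    simp only [neg_mul, sum_neg_distrib]
    field_simp [(prod_pos fun t _ => hZ_pos t (hsum _)).ne']
  calc (#{i | ∑ t, α t * u t i ≤ 0} : ℝ) / m
      ≤ (∑ i, exp (-∑ t, α t * u t i)) / m := by
        gcongr; exact card_filter_nonpos_le_sum_exp_neg _ _
    _ = ∏ t, 2 * √(ε t * (1 - ε t)) := by
        simp_rw [sum_div, ← hD_last, ← sum_mul, hsum, one_mul, hZ_prod]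

/-- Classical AdaBoost training-error bound: with boosting weights `D` initialized
uniformly and updated by `D (t+1) i = D t i * exp (-α t * u t i) / Z t`, where
`u t i ∈ {-1, 1}` records whether weak learner `t` classifies sample `i` correctly,
`ε t` is the weighted error, `α t = (1/2) log ((1 - ε t)/ε t)` and `Z t` the
normalizer, the fraction of training points misclassified by the combined classifier
(those with `∑ t, α t * u t i ≤ 0`) is at most `∏ t, 2 * √(ε t * (1 - ε t))`. -/
theorem adaGNN_adaboost_training_error_bound
    (m T : ℕ) (hm : 1 ≤ m) (hT : 1 ≤ T)
    (u : Fin T → Fin m → ℝ) (hu : ∀ t i, u t i = -1 ∨ u t i = 1)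
    (D : Fin (T + 1) → Fin m → ℝ)
    (ε α Z : Fin T → ℝ)
    (hD0 : ∀ i, D 0 i = 1 / m)
    (hε : ∀ t, ε t = ∑ i ∈ Finset.univ.filter fun i => u t i = -1, D t.castSucc i)
    (hε0 : ∀ t, 0 < ε t) (hε1 : ∀ t, ε t < 1)
    (hα : ∀ t, α t = (1 / 2) * Real.log ((1 - ε t) / ε t))
    (hZ : ∀ t, Z t = ∑ i, D t.castSucc i * Real.exp (-(α t) * u t i))
    (hD : ∀ t i, D t.succ i = D t.castSucc i * Real.exp (-(α t) * u t i) / Z t) :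
    ((Finset.univ.filter fun i : Fin m => (∑ t, α t * u t i) ≤ 0).card : ℝ) / m ≤
      ∏ t, 2 * Real.sqrt (ε t * (1 - ε t)) :=
  adaGNN_adaboost_training_error_bound_general m T hm u hu D ε α Z hD0 hε hε0 hε1 hα hZ hD
end

section
/- Let m ≥ 1 and T ≥ 1 be natural numbers, let u : Fin T → Fin m → ℝ satisfy u t i ∈ {−1, 1}, and define D, ε, α, Z recursively as in AdaBoost: D 0 i = 1/m, ε t = ∑ i with u t i = −1, D t i with 0 < ε t < 1, α t = (1/2) * ln((1 − ε t)/(ε t)), Z t = ∑ i, D t i * exp(−α t * u t i), and D (t+1) i = D t i * exp(−α t * u t i) / Z t. Then for every θ ≥ 0, the fraction of indices i ∈ Fin m with ∑ t, α t * u t i ≤ θ * ∑ t, α t is at most ∏ t, 2 * (ε t)^((1 − θ)/2) * (1 − ε t)^((1 + θ)/2). -/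
/-!
Unrolling the multiplicative update gives `D_T(i) ∏ Z_t = D_0(i) ∏ exp(-α_t u_t(i))`, and since
`D_T` is still a probability vector, summing over `i` shows that the average of
`exp(-margin_i)` is `∏ Z_t`. Bounding the indicator of `margin_i ≤ θ ∑ α_t` by
`exp(θ ∑ α_t - margin_i)` bounds the fraction by `∏ exp(θ α_t) Z_t`. As `u_t(i) = ±1`,
`Z_t = ε_t e^{α_t} + (1 - ε_t) e^{-α_t}`, and for AdaBoost's choice of `α_t` both terms equal
`√(ε_t (1 - ε_t))`, which turns each factor into `2 ε_t^{(1-θ)/2} (1 - ε_t)^{(1+θ)/2}`.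
-/

open Finset Real

section NormalizedWeights

variable {ι : Type*} {T : ℕ} {D : Fin (T + 1) → ι → ℝ} {w : Fin T → ι → ℝ}
  {Z : Fin T → ℝ}

theorem weights_last_mul_prod_eq (hD : ∀ t i, D t.succ i = D t.castSucc i * w t i / Z t)
    (hZ : ∀ t, Z t ≠ 0) (i : ι) :
    D (Fin.last T) i * ∏ t, Z t = D 0 i * ∏ t, w t i := by
  induction T with
  | zero => simp
  | succ T ih =>
    have hprev := ih (D := fun k => D k.castSucc) (w := fun t => w t.castSucc)
      (Z := fun t => Z t.castSucc) (fun t j => by rw [← Fin.succ_castSucc]; exact hD t.castSucc j)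
      (fun t => hZ _)
    rw [Fin.castSucc_zero] at hprev
    rw [Fin.prod_univ_castSucc, Fin.prod_univ_castSucc, ← Fin.succ_last, hD]
    field_simp [hZ (Fin.last T)]
    linear_combination w (Fin.last T) i * hprev

theorem weights_pos [Fintype ι] [Nonempty ι] (hD0 : ∀ i, 0 < D 0 i) (hw : ∀ t i, 0 < w t i)
    (hZ : ∀ t, Z t = ∑ i, D t.castSucc i * w t i)
    (hD : ∀ t i, D t.succ i = D t.castSucc i * w t i / Z t) (k : Fin (T + 1)) (i : ι) :
    0 < D k i := by
  induction k using Fin.induction generalizing i with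
  | zero => exact hD0 i
  | succ t ih =>
    have hZt : 0 < Z t := hZ t ▸ sum_pos (fun j _ => mul_pos (ih j) (hw t j)) univ_nonempty
    rw [hD]
    exact div_pos (mul_pos (ih i) (hw t i)) hZt

theorem sum_weights_eq_one [Fintype ι] (hD0 : ∑ i, D 0 i = 1)
    (hZ : ∀ t, Z t = ∑ i, D t.castSucc i * w t i) (hZ0 : ∀ t, Z t ≠ 0)
    (hD : ∀ t i, D t.succ i = D t.castSucc i * w t i / Z t)
    (k : Fin (T + 1)) : ∑ i, D k i = 1 := by
  induction k using Fin.induction with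
  | zero => exact hD0
  | succ t _ => simp only [hD, ← sum_div, ← hZ, div_self (hZ0 t)]

theorem sum_weights_zero_mul_prod_eq_prod [Fintype ι] (hD0 : ∑ i, D 0 i = 1)
    (hZ : ∀ t, Z t = ∑ i, D t.castSucc i * w t i) (hZ0 : ∀ t, Z t ≠ 0)
    (hD : ∀ t i, D t.succ i = D t.castSucc i * w t i / Z t) :
    ∑ i, D 0 i * ∏ t, w t i = ∏ t, Z t := by
  simp_rw [← weights_last_mul_prod_eq hD hZ0, ← sum_mul,
    sum_weights_eq_one hD0 hZ hZ0 hD, one_mul]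

end NormalizedWeights

theorem card_filter_le_exp_mul_sum_exp {ι : Type*} [Fintype ι] (g : ι → ℝ) (c : ℝ) :
    (#{i | g i ≤ c} : ℝ) ≤ exp c * ∑ i, exp (-g i) := by
  rw [mul_sum, card_eq_sum_ones, Nat.cast_sum, Nat.cast_one]
  calc ∑ i ∈ {i | g i ≤ c}, (1 : ℝ)
      ≤ ∑ i ∈ {i | g i ≤ c}, exp c * exp (-g i) := by
        refine sum_le_sum fun i hi => ?_
        rw [← exp_add, one_le_exp_iff]
        linarith [(mem_filter.mp hi).2]
    _ ≤ ∑ i, exp c * exp (-g i) :=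
        sum_le_sum_of_subset_of_nonneg (filter_subset _ _) fun i _ _ => by positivity

theorem sum_mul_exp_neg_mul_of_sign {ι : Type*} [Fintype ι] {p u : ι → ℝ}
    (hp : ∑ i, p i = 1) (hu : ∀ i, u i = -1 ∨ u i = 1) (a : ℝ) :
    ∑ i, p i * exp (-a * u i) =
      (∑ i with u i = -1, p i) * exp a + (1 - ∑ i with u i = -1, p i) * exp (-a) := by
  have hcompl : 1 - ∑ i with u i = -1, p i = ∑ i with ¬u i = -1, p i := by
    linarith [sum_filter_add_sum_filter_not univ (u · = -1) p]
  rw [hcompl, sum_mul, sum_mul, ← sum_filter_add_sum_filter_not univ (u · = -1)]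
  congr 1 <;> refine sum_congr rfl fun i hi => ?_
  · rw [(mem_filter.mp hi).2]; ring_nf
  · rw [(hu i).resolve_left (mem_filter.mp hi).2]; ring_nf

theorem exp_mul_add_exp_half_log_div {a b : ℝ} (ha : 0 < a) (hb : 0 < b) (θ : ℝ) :
    exp (θ * (1 / 2 * log (b / a))) *
        (a * exp (1 / 2 * log (b / a)) + b * exp (-(1 / 2 * log (b / a)))) =
      2 * a ^ ((1 - θ) / 2) * b ^ ((1 + θ) / 2) := by
  rw [log_div hb.ne' ha.ne', rpow_def_of_pos ha, rpow_def_of_pos hb]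
  nth_rewrite 2 [← exp_log ha]
  nth_rewrite 3 [← exp_log hb]
  simp only [← exp_add]
  ring_nf
  rw [← exp_add, ← exp_add]
  ring_nf

theorem adaGNN_adaboost_margin_distribution_bound_general
    (m T : ℕ) (hm : 1 ≤ m)
    (u : Fin T → Fin m → ℝ) (hu : ∀ t i, u t i = -1 ∨ u t i = 1)
    (D : Fin (T + 1) → Fin m → ℝ)
    (ε α Z : Fin T → ℝ)
    (hD0 : ∀ i, D 0 i = 1 / m)
    (hε : ∀ t, ε t = ∑ i ∈ Finset.univ.filter fun i => u t i = -1, D t.castSucc i)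
    (hε0 : ∀ t, 0 < ε t) (hε1 : ∀ t, ε t < 1)
    (hα : ∀ t, α t = (1 / 2) * Real.log ((1 - ε t) / ε t))
    (hZ : ∀ t, Z t = ∑ i, D t.castSucc i * Real.exp (-(α t) * u t i))
    (hD : ∀ t i, D t.succ i = D t.castSucc i * Real.exp (-(α t) * u t i) / Z t)
    (θ : ℝ) :
    ((Finset.univ.filter fun i : Fin m =>
        (∑ t, α t * u t i) ≤ θ * ∑ t, α t).card : ℝ) / m ≤
      ∏ t, 2 * ε t ^ ((1 - θ) / 2) * (1 - ε t) ^ ((1 + θ) / 2) := by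
  have hm0 : (0 : ℝ) < m := by exact_mod_cast hm
  have : Nonempty (Fin m) := ⟨⟨0, hm⟩⟩
  have hDpos := weights_pos (fun i => by rw [hD0]; positivity) (fun t i => exp_pos _) hZ hD
  have hZ0 : ∀ t, Z t ≠ 0 := fun t =>
    (hZ t ▸ sum_pos (fun i _ => mul_pos (hDpos _ i) (exp_pos _)) univ_nonempty).ne'
  have hD0sum : ∑ i, D 0 i = 1 := by simp [hD0, hm0.ne']
  have hround (t : Fin T) : exp (θ * α t) * Z t =
      2 * ε t ^ ((1 - θ) / 2) * (1 - ε t) ^ ((1 + θ) / 2) := by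
    rw [hZ, sum_mul_exp_neg_mul_of_sign (sum_weights_eq_one hD0sum hZ hZ0 hD _) (hu t), ← hε,
      hα]
    exact exp_mul_add_exp_half_log_div (hε0 t) (sub_pos.mpr (hε1 t)) θ
  have hmargin (i : Fin m) : exp (-∑ t, α t * u t i) = ∏ t, exp (-(α t) * u t i) := by
    rw [← exp_sum, ← sum_neg_distrib]
    simp only [neg_mul]
  calc _ ≤ exp (θ * ∑ t, α t) * ∑ i, D 0 i * exp (-∑ t, α t * u t i) := by
        refine (div_le_div_of_nonneg_right (card_filter_le_exp_mul_sum_exp _ _) hm0.le).trans_eq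
          ?_
        simp only [hD0, ← mul_sum]
        ring
    _ = ∏ t, 2 * ε t ^ ((1 - θ) / 2) * (1 - ε t) ^ ((1 + θ) / 2) := by
        simp only [hmargin, sum_weights_zero_mul_prod_eq_prod hD0sum hZ hZ0 hD, mul_sum, exp_sum,
          ← prod_mul_distrib, hround]

/-- Margin-distribution bound for AdaBoost: for every `θ ≥ 0`, the fraction of
training points whose (unnormalized) margin `∑ t, α t * u t i` is at most
`θ * ∑ t, α t` is bounded by `∏ t, 2 * ε t ^ ((1-θ)/2) * (1 - ε t) ^ ((1+θ)/2)`
(real powers). -/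
theorem adaGNN_adaboost_margin_distribution_bound
    (m T : ℕ) (hm : 1 ≤ m) (hT : 1 ≤ T)
    (u : Fin T → Fin m → ℝ) (hu : ∀ t i, u t i = -1 ∨ u t i = 1)
    (D : Fin (T + 1) → Fin m → ℝ)
    (ε α Z : Fin T → ℝ)
    (hD0 : ∀ i, D 0 i = 1 / m)
    (hε : ∀ t, ε t = ∑ i ∈ Finset.univ.filter fun i => u t i = -1, D t.castSucc i)
    (hε0 : ∀ t, 0 < ε t) (hε1 : ∀ t, ε t < 1)
    (hα : ∀ t, α t = (1 / 2) * Real.log ((1 - ε t) / ε t))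
    (hZ : ∀ t, Z t = ∑ i, D t.castSucc i * Real.exp (-(α t) * u t i))
    (hD : ∀ t i, D t.succ i = D t.castSucc i * Real.exp (-(α t) * u t i) / Z t)
    (θ : ℝ) (hθ : 0 ≤ θ) :
    ((Finset.univ.filter fun i : Fin m =>
        (∑ t, α t * u t i) ≤ θ * ∑ t, α t).card : ℝ) / m ≤
      ∏ t, 2 * ε t ^ ((1 - θ) / 2) * (1 - ε t) ^ ((1 + θ) / 2) :=
  adaGNN_adaboost_margin_distribution_bound_general m T hm u hu D ε α Z hD0 hε hε0 hε1 hα hZ hD θ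
end

section
/- Let K ≥ 2 be a natural number and let p : Fin K → ℝ be a probability vector with p k > 0 for all k. Consider the function L : (Fin K → ℝ) → ℝ defined by L(f) = ∑ k, p k * exp(−f k / (K − 1)), restricted to the hyperplane V = {f : ∑ k, f k = 0}. Define f* by f* k = (K − 1) * (log (p k) − (1/K) * ∑ j, log (p j)). Then f* ∈ V, f* is the unique global minimizer of L on V, and moreover for all k, j: f* k ≥ f* j if and only if p k ≥ p j (so the argmax of f* coincides with the argmax of p). -/
/-!
Substitute `y k = log (p k) - f k / (K - 1)`, so that `L f = ∑ k, exp (y k)`. On the zero-sum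
hyperplane `∑ k, y k = ∑ k, log (p k)` is fixed, so with `c` the mean of the `log (p k)` the tangent
line `exp y ≥ exp c * (1 + (y - c))` summed over `k` gives `L f ≥ K * exp c`, with equality exactly
when every `y k = c`, i.e. when `f = f*`.
-/

open Finset Real

theorem exp_mul_one_add_sub_le_exp (c y : ℝ) : exp c * (1 + (y - c)) ≤ exp y :=
  calc exp c * (1 + (y - c)) ≤ exp c * exp (y - c) := by
        gcongr; linarith [add_one_le_exp (y - c)]
    _ = exp y := by rw [← exp_add, add_sub_cancel]

theorem exp_mul_one_add_sub_lt_exp {c y : ℝ} (h : y ≠ c) : exp c * (1 + (y - c)) < exp y :=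
  calc exp c * (1 + (y - c)) < exp c * exp (y - c) := by
        gcongr; linarith [add_one_lt_exp (sub_ne_zero.mpr h)]
    _ = exp y := by rw [← exp_add, add_sub_cancel]

theorem mul_exp_neg_eq_exp_log_sub {x : ℝ} (hx : 0 < x) (z : ℝ) :
    x * exp (-z) = exp (log x - z) := by
  rw [exp_sub, exp_log hx, exp_neg, div_eq_mul_inv]

theorem sub_div_eq_iff_eq_mul_sub {u y a c : ℝ} (ha : a ≠ 0) :
    u - y / a = c ↔ y = a * (u - c) := by
  rw [sub_eq_iff_eq_add', ← sub_eq_iff_eq_add, eq_div_iff ha, mul_comm, eq_comm]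

section SumExp

variable {ι : Type*} {s : Finset ι} {y : ι → ℝ} {c : ℝ}

theorem sum_exp_sub_tangent_eq (hy : ∑ i ∈ s, y i = #s * c) :
    ∑ i ∈ s, (exp (y i) - exp c * (1 + (y i - c))) = ∑ i ∈ s, exp (y i) - #s * exp c := by
  simp only [sum_sub_distrib, ← mul_sum, sum_add_distrib, sum_const, nsmul_eq_mul, mul_one, hy]
  ring

theorem card_mul_exp_le_sum_exp (hy : ∑ i ∈ s, y i = #s * c) :
    #s * exp c ≤ ∑ i ∈ s, exp (y i) := by
  have := sum_nonneg fun i (_ : i ∈ s) => sub_nonneg.mpr (exp_mul_one_add_sub_le_exp c (y i))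
  rw [sum_exp_sub_tangent_eq hy] at this
  linarith

theorem eq_of_sum_exp_eq_card_mul_exp (hy : ∑ i ∈ s, y i = #s * c)
    (h : ∑ i ∈ s, exp (y i) = #s * exp c) : ∀ i ∈ s, y i = c := by
  have hzero := sum_exp_sub_tangent_eq hy
  rw [h, sub_self, sum_eq_zero_iff_of_nonneg
    fun i _ => sub_nonneg.mpr (exp_mul_one_add_sub_le_exp c (y i))] at hzero
  intro i hi
  by_contra hne
  exact (sub_pos.mpr (exp_mul_one_add_sub_lt_exp hne)).ne' (hzero i hi)

end SumExp

theorem adaGNN_samme_population_minimizer_general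
    (K : ℕ) (hK : 2 ≤ K)
    (p : Fin K → ℝ) (hp : ∀ k, 0 < p k)
    (L : (Fin K → ℝ) → ℝ)
    (hL : ∀ f, L f = ∑ k, p k * Real.exp (-f k / ((K : ℝ) - 1)))
    (fstar : Fin K → ℝ)
    (hfstar : ∀ k, fstar k =
      ((K : ℝ) - 1) * (Real.log (p k) - (1 / (K : ℝ)) * ∑ j, Real.log (p j))) :
    (∑ k, fstar k = 0) ∧
      (∀ f : Fin K → ℝ, (∑ k, f k = 0) → L fstar ≤ L f) ∧
      (∀ f : Fin K → ℝ, (∑ k, f k = 0) → L f = L fstar → f = fstar) ∧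
      (∀ k j, fstar j ≤ fstar k ↔ p j ≤ p k) := by
  have hK1 : (0 : ℝ) < K - 1 := by linarith [show (2 : ℝ) ≤ K from mod_cast hK]
  set c := (1 / (K : ℝ)) * ∑ j, log (p j)
  have hlog_sum : ∑ k, log (p k) = #(univ : Finset (Fin K)) * c := by
    simp only [c, card_univ, Fintype.card_fin]
    field_simp
  set y : (Fin K → ℝ) → Fin K → ℝ := fun f k => log (p k) - f k / (K - 1)
  have hLy f : L f = ∑ k, exp (y f k) := by
    simp only [hL, y, neg_div, mul_exp_neg_eq_exp_log_sub (hp _)]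
  have hy_sum f (hf : ∑ k, f k = 0) : ∑ k, y f k = #(univ : Finset (Fin K)) * c := by
    simp only [y, sum_sub_distrib, ← sum_div, hf, zero_div, sub_zero, hlog_sum]
  have hy_iff f : (∀ k, y f k = c) ↔ f = fstar := by
    simp only [y, funext_iff, hfstar, sub_div_eq_iff_eq_mul_sub hK1.ne']
  have hsum : ∑ k, fstar k = 0 := by
    simp only [hfstar, ← mul_sum, sum_sub_distrib, sum_const, nsmul_eq_mul, hlog_sum, sub_self,
      mul_zero]
  have hLfstar : L fstar = #(univ : Finset (Fin K)) * exp c := by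
    simp [hLy, (hy_iff fstar).mpr rfl]
  refine ⟨hsum, fun f hf => ?_, fun f hf hLf => ?_, fun k j => ?_⟩
  · exact hLfstar ▸ hLy f ▸ card_mul_exp_le_sum_exp (hy_sum f hf)
  · exact (hy_iff f).mp fun k =>
      eq_of_sum_exp_eq_card_mul_exp (hy_sum f hf) (hLy f ▸ hLfstar ▸ hLf) k (mem_univ k)
  · simp only [hfstar, mul_le_mul_iff_right₀ hK1, sub_le_sub_iff_right,
      log_le_log_iff (hp j) (hp k)]

/-- Population minimizer of the multi-class exponential loss underlying SAMME/SAMME.R: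
for class probabilities `p k > 0` summing to `1`, the loss
`L f = ∑ k, p k * exp (-f k / (K - 1))` restricted to the zero-sum hyperplane
`∑ k, f k = 0` is uniquely minimized at
`f* k = (K - 1) * (log (p k) - (1/K) * ∑ j, log (p j))`, and `f*` is ordered the
same way as `p`, so its argmax coincides with the Bayes-optimal class. -/
theorem adaGNN_samme_population_minimizer
    (K : ℕ) (hK : 2 ≤ K)
    (p : Fin K → ℝ) (hp : ∀ k, 0 < p k) (hp1 : ∑ k, p k = 1)
    (L : (Fin K → ℝ) → ℝ)
    (hL : ∀ f, L f = ∑ k, p k * Real.exp (-f k / ((K : ℝ) - 1)))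
    (fstar : Fin K → ℝ)
    (hfstar : ∀ k, fstar k =
      ((K : ℝ) - 1) * (Real.log (p k) - (1 / (K : ℝ)) * ∑ j, Real.log (p j))) :
    (∑ k, fstar k = 0) ∧
      (∀ f : Fin K → ℝ, (∑ k, f k = 0) → L fstar ≤ L f) ∧
      (∀ f : Fin K → ℝ, (∑ k, f k = 0) → L f = L fstar → f = fstar) ∧
      (∀ k j, fstar j ≤ fstar k ↔ p j ≤ p k) :=
  adaGNN_samme_population_minimizer_general K hK p hp L hL fstar hfstar
end

section
/- There exists an absolute constant C > 0 with the following property. Let X be a measurable space, n ≥ 2 a natural number, s : Fin n → X → ℝ a family of measurable functions with values in [0,1], D a probability measure on X × ({0,1} with the discrete σ-algebra), τ ∈ (0,1), θ ∈ (0,1), δ ∈ (0,1), and m ≥ 2 a natural number. For a function F : X → ℝ define the margin m_F(x,y) = (y − τ) * (F x − τ). Then with probability at least 1 − δ over a sample S = ((x_1,y_1), …, (x_m,y_m)) drawn i.i.d. from D (i.e., from the m-fold product measure D^m), the following holds simultaneously for every probability vector α : Fin n → ℝ, writing f x = ∑ i, α i * s i x: D{(x,y) : m_f(x,y) ≤ 0}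 ≤ (1/m) * |{j : m_f(x_j, y_j) ≤ θ}| + C * √((log n * log m)/(m * θ²) + log(1/δ)/m). -/
/-!
Draw `k` indices i.i.d. from `α` and let `g` be the average of the chosen base predictors
(Maurey's sparsification of `f = ∑ α i • s i`). At each point, Hoeffding's inequality makes
`|g - f| ≥ θ / 2` an event of probability at most `2 e^{-kθ²/2}` over the draw, and off that event
margins move by less than `θ / 2`. Averaging over the draw therefore bounds `D (margin f ≤ 0)` by
the mean of `D (margin g ≤ θ / 2)`, and the mean empirical frequency of `margin g ≤ θ / 2` by that
of `margin f ≤ θ`, each up to `2 e^{-kθ²/2}`. The averages `g` form a class of `n ^ k` functions,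
so Hoeffding's inequality and a union bound show that with probability `1 - δ` no true frequency
`D (margin g ≤ θ / 2)` exceeds its empirical one by more than `√((k log n + log (1/δ)) / (2m))`.
The choice `k = ⌈2 log m / θ²⌉` makes both errors `O(√(log n log m / (m θ²) + log (1/δ) / m))`.
-/

open MeasureTheory ProbabilityTheory Real Finset Set
open scoped ENNReal

section Hoeffding

variable {Ω : Type*} [MeasurableSpace Ω] (μ : Measure Ω) [IsProbabilityMeasure μ]
  {v : Ω → ℝ} {a b : ℝ}

theorem measureReal_pi_sum_sub_integral_ge_le (hv : Measurable v) (hab : ∀ x, v x ∈ Icc a b)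
    (k : ℕ) {t : ℝ} (ht : 0 ≤ t) :
    (Measure.pi fun _ : Fin k => μ).real {S | k * t ≤ ∑ j, (v (S j) - μ[v])} ≤
      exp (-2 * k * t ^ 2 / (b - a) ^ 2) := by
  have hsub (j : Fin k) : HasSubgaussianMGF (fun S : Fin k → Ω => v (S j) - μ[v])
      ((‖b - a‖₊ / 2) ^ 2) (Measure.pi fun _ : Fin k => μ) := by
    have hpres := measurePreserving_eval (fun _ : Fin k => μ) j
    refine HasSubgaussianMGF.of_map (X := fun x => v x - μ[v]) hpres.measurable.aemeasurable ?_
    rw [hpres.map_eq]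
    exact hasSubgaussianMGF_of_mem_Icc hv.aemeasurable (ae_of_all _ hab)
  have hindep : iIndepFun (fun (j : Fin k) (S : Fin k → Ω) => v (S j) - μ[v])
      (Measure.pi fun _ : Fin k => μ) :=
    iIndepFun_pi fun _ => (hv.sub_const _).aemeasurable
  refine (HasSubgaussianMGF.measure_sum_ge_le_of_iIndepFun hindep (fun j _ => hsub j)
    (mul_nonneg k.cast_nonneg ht)).trans_eq ?_
  congr 1
  simp only [sum_const, card_univ, Fintype.card_fin, nsmul_eq_mul, NNReal.coe_mul,
    NNReal.coe_natCast, NNReal.coe_pow, NNReal.coe_div, coe_nnnorm, Real.norm_eq_abs,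
    NNReal.coe_ofNat, div_pow, sq_abs]
  rcases eq_or_ne (k : ℝ) 0 with hk | hk
  · simp [hk]
  rcases eq_or_ne (b - a) 0 with hba | hba
  · simp [hba]
  field_simp

theorem measureReal_pi_sum_integral_sub_ge_le (hv : Measurable v) (hab : ∀ x, v x ∈ Icc a b)
    (k : ℕ) {t : ℝ} (ht : 0 ≤ t) :
    (Measure.pi fun _ : Fin k => μ).real {S | k * t ≤ ∑ j, (μ[v] - v (S j))} ≤
      exp (-2 * k * t ^ 2 / (b - a) ^ 2) := by
  have h := measureReal_pi_sum_sub_integral_ge_le μ (v := -v) hv.neg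
    (fun x => ⟨neg_le_neg (hab x).2, neg_le_neg (hab x).1⟩) k ht
  simp only [Pi.neg_apply, integral_neg, neg_sub_neg] at h
  convert h using 3

theorem measureReal_pi_abs_mean_sub_integral_ge_le (hv : Measurable v)
    (hab : ∀ x, v x ∈ Icc a b) {k : ℕ} (hk : 0 < k) {t : ℝ} (ht : 0 ≤ t) :
    (Measure.pi fun _ : Fin k => μ).real {S | t ≤ |(∑ j, v (S j)) / k - μ[v]|} ≤
      2 * exp (-2 * k * t ^ 2 / (b - a) ^ 2) := by
  have hk' : (0 : ℝ) < k := Nat.cast_pos.mpr hk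
  have hsplit : {S : Fin k → Ω | t ≤ |(∑ j, v (S j)) / k - μ[v]|} ⊆
      {S | k * t ≤ ∑ j, (v (S j) - μ[v])} ∪ {S | k * t ≤ ∑ j, (μ[v] - v (S j))} := by
    intro S hS
    have hmean : (∑ j, v (S j)) / k - μ[v] = (∑ j, (v (S j) - μ[v])) / k := by
      rw [sum_sub_distrib, sum_const, card_univ, Fintype.card_fin, nsmul_eq_mul]
      field_simp
    rw [mem_ofPred_eq, hmean, abs_div, abs_of_pos hk', le_div_iff₀ hk', mul_comm, le_abs'] at hS
    simp only [mem_union, mem_ofPred_eq, sum_sub_distrib] at hS ⊢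
    rcases hS with h | h
    · exact Or.inr (by linarith)
    · exact Or.inl h
  calc _ ≤ _ := measureReal_mono hsplit
    _ ≤ _ := measureReal_union_le _ _
    _ ≤ _ := by
      rw [two_mul]
      exact add_le_add (measureReal_pi_sum_sub_integral_ge_le μ hv hab k ht)
        (measureReal_pi_sum_integral_sub_ge_le μ hv hab k ht)

end Hoeffding

section Empirical

variable {Ω : Type*} [MeasurableSpace Ω] {m : ℕ}

noncomputable def empiricalMeasure (S : Fin m → Ω) : Measure Ω :=
  (m : ℝ≥0∞)⁻¹ • ∑ j, Measure.dirac (S j)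

theorem empiricalMeasure_apply (S : Fin m → Ω) {B : Set Ω} [DecidablePred (· ∈ B)]
    (hB : MeasurableSet B) :
    empiricalMeasure S B = (m : ℝ≥0∞)⁻¹ * #{j | S j ∈ B} := by
  simp [empiricalMeasure, Measure.dirac_apply' _ hB, Set.indicator_apply]

theorem empiricalMeasure_toReal (S : Fin m → Ω) {B : Set Ω} [DecidablePred (· ∈ B)]
    (hB : MeasurableSet B) : (empiricalMeasure S B).toReal = (1 / m : ℝ) * #{j | S j ∈ B} := by
  simp [empiricalMeasure_apply S hB]

instance (S : Fin m → Ω) : IsZeroOrProbabilityMeasure (empiricalMeasure S) := by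
  classical
  constructor
  rw [empiricalMeasure_apply S MeasurableSet.univ]
  rcases eq_or_ne m 0 with rfl | hm
  · simp
  · simp [ENNReal.inv_mul_cancel (Nat.cast_ne_zero.mpr hm) (ENNReal.natCast_ne_top m)]

theorem measure_pi_exists_empiricalMeasure_add_lt_le {ι : Type*} [Fintype ι] (D : Measure Ω)
    [IsProbabilityMeasure D] {B : ι → Set Ω} (hB : ∀ i, MeasurableSet (B i)) {t : ℝ}
    (ht : 0 ≤ t) :
    (Measure.pi fun _ : Fin m => D) {S | ∃ i, empiricalMeasure S (B i) + ENNReal.ofReal t < D (B i)}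
      ≤ Fintype.card ι * ENNReal.ofReal (exp (-2 * m * t ^ 2)) := by
  classical
  set undershoot : ι → Set (Fin m → Ω) :=
    fun i => {S | m * t ≤ ∑ j, (D.real (B i) - (B i).indicator 1 (S j))}
  have hsub (i : ι) :
      {S : Fin m → Ω | empiricalMeasure S (B i) + ENNReal.ofReal t < D (B i)} ⊆ undershoot i := by
    intro S hS
    have hS' := ENNReal.toReal_strict_mono (measure_ne_top D _) hS
    rw [ENNReal.toReal_add (measure_ne_top _ _) ENNReal.ofReal_ne_top,
      empiricalMeasure_toReal S (hB i), ENNReal.toReal_ofReal ht] at hS'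
    simp only [undershoot, mem_ofPred_eq, sum_sub_distrib,
      sum_const, card_univ, Fintype.card_fin, nsmul_eq_mul, Set.indicator_apply, Pi.one_apply,
      sum_boole]
    rcases eq_or_ne m 0 with rfl | hm
    · simp
    have hm' : (0 : ℝ) < m := by positivity
    rw [measureReal_def]
    field_simp at hS'
    linarith
  have hprob (i : ι) :
      (Measure.pi fun _ : Fin m => D) (undershoot i) ≤ ENNReal.ofReal (exp (-2 * m * t ^ 2)) := by
    have hv : Measurable ((B i).indicator (1 : Ω → ℝ)) := measurable_one.indicator (hB i)
    have hv01 (x : Ω) : (B i).indicator (1 : Ω → ℝ) x ∈ Set.Icc 0 1 := by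
      by_cases hx : x ∈ B i <;> simp [hx]
    have h := measureReal_pi_sum_integral_sub_ge_le D hv hv01 m ht
    rw [integral_indicator_one (hB i)] at h
    rw [← ofReal_measureReal]
    exact ENNReal.ofReal_le_ofReal (by simpa [undershoot] using h)
  calc _ ≤ (Measure.pi fun _ : Fin m => D) (⋃ i, undershoot i) :=
        measure_mono (by rw [ofPred_exists]; exact iUnion_mono hsub)
    _ ≤ ∑ i, (Measure.pi fun _ : Fin m => D) (undershoot i) := measure_iUnion_fintype_le _ _
    _ ≤ ∑ _i : ι, ENNReal.ofReal (exp (-2 * m * t ^ 2)) := sum_le_sum fun i _ => hprob i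
    _ = _ := by rw [sum_const, card_univ, nsmul_eq_mul]

theorem measure_pi_exists_empiricalMeasure_add_sqrt_lt_le {ι : Type*} [Fintype ι] [Nonempty ι]
    (D : Measure Ω) [IsProbabilityMeasure D] {B : ι → Set Ω} (hB : ∀ i, MeasurableSet (B i))
    (hm : 0 < m) {δ : ℝ} (hδ0 : 0 < δ) (hδ1 : δ ≤ 1) :
    (Measure.pi fun _ : Fin m => D) {S | ∃ i, empiricalMeasure S (B i) +
        ENNReal.ofReal √((log (Fintype.card ι) + log (1 / δ)) / (2 * m)) < D (B i)} ≤
      ENNReal.ofReal δ := by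
  have hcard : (1 : ℝ) ≤ Fintype.card ι := Nat.one_le_cast.mpr Fintype.card_pos
  have hL : 0 ≤ log (Fintype.card ι) + log (1 / δ) :=
    add_nonneg (log_nonneg hcard) (log_nonneg (by rw [le_div_iff₀ hδ0]; linarith))
  refine (measure_pi_exists_empiricalMeasure_add_lt_le D hB (sqrt_nonneg _)).trans_eq ?_
  have hexp : exp (-2 * m * √((log (Fintype.card ι) + log (1 / δ)) / (2 * m)) ^ 2) =
      δ / Fintype.card ι := by
    rw [sq_sqrt (by positivity), show -2 * (m : ℝ) * ((log (Fintype.card ι) + log (1 / δ)) /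
      (2 * m)) = -log (Fintype.card ι) + log δ by field_simp; rw [one_div, log_inv]; ring,
      exp_add, exp_neg, exp_log (by positivity), exp_log hδ0, div_eq_inv_mul]
  rw [hexp, ← ENNReal.ofReal_natCast, ← ENNReal.ofReal_mul (Nat.cast_nonneg _)]
  congr 1
  field_simp

end Empirical

section Averaging

variable {I Ω : Type*} [MeasurableSpace I] [MeasurableSpace Ω] (Q : Measure I)
  {Dev : I → Set Ω}

theorem lintegral_measure_le_of_forall_measure_le [SFinite Q] (ν : Measure Ω) [SFinite ν]
    [IsZeroOrProbabilityMeasure ν] (hDev : MeasurableSet {q : I × Ω | q.2 ∈ Dev q.1})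
    {ε : ℝ≥0∞} (hε : ∀ p, Q {i | p ∈ Dev i} ≤ ε) :
    ∫⁻ i, ν (Dev i) ∂Q ≤ ε :=
  calc ∫⁻ i, ν (Dev i) ∂Q = Q.prod ν {q | q.2 ∈ Dev q.1} := (Measure.prod_apply hDev).symm
    _ = ∫⁻ p, Q {i | p ∈ Dev i} ∂ν := Measure.prod_apply_symm hDev
    _ ≤ ∫⁻ _, ε ∂ν := lintegral_mono hε
    _ ≤ ε := by
      rw [lintegral_const]
      exact mul_le_of_le_one_right' prob_le_one

theorem measure_le_measure_add_of_forall_subset_union [IsProbabilityMeasure Q]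
    (D ν : Measure Ω) [IsProbabilityMeasure D] [IsZeroOrProbabilityMeasure ν]
    {A M : Set Ω} {B : I → Set Ω} (hA : ∀ i, A ⊆ B i ∪ Dev i) (hB : ∀ i, B i ⊆ M ∪ Dev i)
    (hDev : MeasurableSet {q : I × Ω | q.2 ∈ Dev q.1}) {ε η : ℝ≥0∞}
    (hε : ∀ p, Q {i | p ∈ Dev i} ≤ ε) (hη : ∀ i, D (B i) ≤ ν (B i) + η) :
    D A ≤ ν M + η + 2 * ε := by
  have hmeas (μ : Measure Ω) [SFinite μ] : Measurable fun i => μ (Dev i) :=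
    measurable_measure_prodMk_left hDev
  calc D A = ∫⁻ _, D A ∂Q := by simp
    _ ≤ ∫⁻ i, D (B i) + D (Dev i) ∂Q :=
        lintegral_mono fun i => (measure_mono (hA i)).trans (measure_union_le _ _)
    _ = ∫⁻ i, D (B i) ∂Q + ∫⁻ i, D (Dev i) ∂Q := lintegral_add_right _ (hmeas D)
    _ ≤ ∫⁻ i, ν (B i) + η ∂Q + ε := by
        gcongr with i
        · exact hη i
        · exact lintegral_measure_le_of_forall_measure_le Q D hDev hε
    _ ≤ ∫⁻ i, ν M + ν (Dev i) ∂Q + η + ε := by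
        rw [lintegral_add_right _ measurable_const, lintegral_const, measure_univ, mul_one]
        gcongr with i
        exact (measure_mono (hB i)).trans (measure_union_le _ _)
    _ ≤ ν M + ε + η + ε := by
        rw [lintegral_add_left measurable_const, lintegral_const, measure_univ, mul_one]
        gcongr
        exact lintegral_measure_le_of_forall_measure_le Q ν hDev hε
    _ = ν M + η + 2 * ε := by ring

end Averaging

section Margin

variable {X : Type*}

def margin (τ : ℝ) (F : X → ℝ) (p : X × Fin 2) : ℝ := (((p.2 : ℕ) : ℝ) - τ) * (F p.1 - τ)

theorem measurable_margin [MeasurableSpace X] (τ : ℝ) {F : X → ℝ} (hF : Measurable F) :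
    Measurable (margin τ F) :=
  (((measurable_of_countable fun b : Fin 2 => ((b : ℕ) : ℝ)).comp measurable_snd).sub_const τ).mul
    ((hF.comp measurable_fst).sub_const τ)

theorem margin_sub_margin_le {τ : ℝ} (hτ : τ ∈ Set.Icc 0 1) (F G : X → ℝ) (p : X × Fin 2) :
    margin τ F p - margin τ G p ≤ |F p.1 - G p.1| := by
  have hy : |((p.2 : ℕ) : ℝ) - τ| ≤ 1 := by
    rcases Fin.exists_fin_two.mp ⟨p.2, rfl⟩ with h | h <;>
      simp only [h, Fin.val_zero, Fin.val_one, Nat.cast_zero, Nat.cast_one, abs_le] <;>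
      constructor <;> linarith [hτ.1, hτ.2]
  calc margin τ F p - margin τ G p = (((p.2 : ℕ) : ℝ) - τ) * (F p.1 - G p.1) := by
        unfold margin; ring
    _ ≤ |((p.2 : ℕ) : ℝ) - τ| * |F p.1 - G p.1| := by rw [← abs_mul]; exact le_abs_self _
    _ ≤ |F p.1 - G p.1| := mul_le_of_le_one_left (abs_nonneg _) hy

theorem setOf_margin_le_subset_union {τ : ℝ} (hτ : τ ∈ Set.Icc 0 1) (F G : X → ℝ) {c d r : ℝ}
    (hcd : c + r ≤ d) :
    {p | margin τ F p ≤ c} ⊆ {p | margin τ G p ≤ d} ∪ {p | r ≤ |G p.1 - F p.1|} := by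
  intro p hp
  by_cases hdev : r ≤ |G p.1 - F p.1|
  · exact Or.inr hdev
  · have := margin_sub_margin_le hτ G F p
    exact Or.inl (show margin τ G p ≤ d by linarith [hp.out, not_le.mp hdev])

end Margin

section Sparsification

variable {ι X : Type*}

noncomputable def weightPMF [Fintype ι] (α : ι → ℝ) (hα0 : ∀ i, 0 ≤ α i) (hα1 : ∑ i, α i = 1) :
    PMF ι :=
  PMF.ofFintype (fun i => ENNReal.ofReal (α i)) (by
    rw [← ENNReal.ofReal_sum_of_nonneg fun i _ => hα0 i, hα1, ENNReal.ofReal_one])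

theorem integral_weightPMF [Fintype ι] [MeasurableSpace ι] [MeasurableSingletonClass ι]
    {α : ι → ℝ} (hα0 : ∀ i, 0 ≤ α i) (hα1 : ∑ i, α i = 1) (u : ι → ℝ) :
    ∫ i, u i ∂(weightPMF α hα0 hα1).toMeasure = ∑ i, α i * u i := by
  simp [PMF.integral_eq_sum, weightPMF, ENNReal.toReal_ofReal (hα0 _)]

noncomputable def sparseAverage (s : ι → X → ℝ) {k : ℕ} (i : Fin k → ι) (x : X) : ℝ :=
  (∑ j, s (i j) x) / k

theorem measurable_sparseAverage [MeasurableSpace X] {s : ι → X → ℝ}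
    (hs : ∀ i, Measurable (s i)) {k : ℕ} (i : Fin k → ι) : Measurable (sparseAverage s i) :=
  (Finset.measurable_sum _ fun j _ => hs (i j)).div_const _

theorem measure_pi_le_abs_sparseAverage_sub_le [Fintype ι] [MeasurableSpace ι]
    [MeasurableSingletonClass ι] {α : ι → ℝ} (hα0 : ∀ i, 0 ≤ α i) (hα1 : ∑ i, α i = 1)
    {s : ι → X → ℝ} (hs01 : ∀ i x, s i x ∈ Set.Icc 0 1) {k : ℕ} (hk : 0 < k) (x : X) {t : ℝ}
    (ht : 0 ≤ t) :
    (Measure.pi fun _ : Fin k => (weightPMF α hα0 hα1).toMeasure)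
        {i | t ≤ |sparseAverage s i x - ∑ a, α a * s a x|} ≤
      ENNReal.ofReal (2 * exp (-2 * k * t ^ 2)) := by
  have h := measureReal_pi_abs_mean_sub_integral_ge_le (weightPMF α hα0 hα1).toMeasure
    (v := fun a => s a x) .of_discrete (fun a => hs01 a x) hk ht
  rw [integral_weightPMF] at h
  rw [← ofReal_measureReal]
  exact ENNReal.ofReal_le_ofReal (by simpa [sparseAverage] using h)

end Sparsification

theorem measureReal_margin_nonpos_le {X ι : Type*} [MeasurableSpace X] [Fintype ι]
    [MeasurableSpace ι] [MeasurableSingletonClass ι] {s : ι → X → ℝ} (hs : ∀ i, Measurable (s i))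
    (hs01 : ∀ i x, s i x ∈ Set.Icc 0 1) (D : Measure (X × Fin 2)) [IsProbabilityMeasure D]
    {τ θ η : ℝ} (hτ : τ ∈ Set.Icc 0 1) (hθ : 0 ≤ θ) (hη : 0 ≤ η) {k m : ℕ} (hk : 0 < k)
    (S : Fin m → X × Fin 2)
    (hS : ∀ i : Fin k → ι, D {p | margin τ (sparseAverage s i) p ≤ θ / 2} ≤
      empiricalMeasure S {p | margin τ (sparseAverage s i) p ≤ θ / 2} + ENNReal.ofReal η)
    {α : ι → ℝ} (hα0 : ∀ i, 0 ≤ α i) (hα1 : ∑ i, α i = 1) :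
    D.real {p | margin τ (fun x => ∑ a, α a * s a x) p ≤ 0} ≤
      (1 / m : ℝ) * #{j | margin τ (fun x => ∑ a, α a * s a x) (S j) ≤ θ} + η +
        4 * exp (-k * θ ^ 2 / 2) := by
  set f : X → ℝ := fun x => ∑ a, α a * s a x
  have hf : Measurable f := Finset.measurable_sum _ fun a _ => (hs a).const_mul (α a)
  set Dev : (Fin k → ι) → Set (X × Fin 2) :=
    fun i => {p | θ / 2 ≤ |sparseAverage s i p.1 - f p.1|}
  have hDev : MeasurableSet {q : (Fin k → ι) × (X × Fin 2) | q.2 ∈ Dev q.1} :=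
    measurableSet_le measurable_const
      (((measurable_from_prod_countable_right (f := fun q : (Fin k → ι) × (X × Fin 2) =>
        sparseAverage s q.1 q.2.1) fun i => (measurable_sparseAverage hs i).comp measurable_fst).sub
          (hf.comp (measurable_fst.comp measurable_snd))).abs)
  have hA (i : Fin k → ι) := setOf_margin_le_subset_union hτ f (sparseAverage s i)
    (c := 0) (d := θ / 2) (r := θ / 2) (by linarith)
  have hB (i : Fin k → ι) : {p | margin τ (sparseAverage s i) p ≤ θ / 2} ⊆
      {p | margin τ f p ≤ θ} ∪ Dev i := fun p hp =>
    (setOf_margin_le_subset_union hτ (sparseAverage s i) f (r := θ / 2) (by linarith) hp).imp id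
      fun h => by rwa [mem_ofPred_eq, abs_sub_comm] at h
  have hε (p : X × Fin 2) : (Measure.pi fun _ : Fin k => (weightPMF α hα0 hα1).toMeasure)
      {i | p ∈ Dev i} ≤ ENNReal.ofReal (2 * exp (-2 * k * (θ / 2) ^ 2)) :=
    measure_pi_le_abs_sparseAverage_sub_le hα0 hα1 hs01 hk p.1 (by positivity)
  have key := measure_le_measure_add_of_forall_subset_union _ D (empiricalMeasure S) hA hB hDev
    hε hS
  have hM : MeasurableSet {p | margin τ f p ≤ θ} :=
    measurableSet_le (measurable_margin τ hf) measurable_const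
  refine (ENNReal.toReal_mono (by finiteness) key).trans_eq ?_
  rw [ENNReal.toReal_add (by finiteness) (by finiteness),
    ENNReal.toReal_add (by finiteness) (by finiteness), ENNReal.toReal_mul,
    empiricalMeasure_toReal S hM, ENNReal.toReal_ofReal hη,
    ENNReal.toReal_ofReal (by positivity), ENNReal.toReal_ofNat,
    show -2 * (k : ℝ) * (θ / 2) ^ 2 = -k * θ ^ 2 / 2 by ring]
  simp only [mem_ofPred_eq]
  ring

theorem one_div_le_two_mul_sqrt {n m : ℕ} (hn : 2 ≤ n) (hm : 2 ≤ m) {θ δ : ℝ} (hθ0 : 0 < θ)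
    (hθ1 : θ ≤ 1) (hδ0 : 0 < δ) (hδ1 : δ ≤ 1) :
    1 / (m : ℝ) ≤ 2 * √(log n * log m / (m * θ ^ 2) + log (1 / δ) / m) := by
  set T := log n * log m / (m * θ ^ 2) + log (1 / δ) / m
  have hm1 : (1 : ℝ) ≤ m := by exact_mod_cast (by omega : 1 ≤ m)
  have hlog2 : 1 / 2 < log 2 := by linarith [log_two_gt_d9]
  have hlogm : log 2 ≤ log m := log_le_log (by norm_num) (by exact_mod_cast hm)
  have hlogn : log 2 ≤ log n := log_le_log (by norm_num) (by exact_mod_cast hn)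
  have hlogδ : 0 ≤ log (1 / δ) := log_nonneg (by rw [le_div_iff₀ hδ0]; linarith)
  have hθ2 : θ ^ 2 ≤ 1 := pow_le_one₀ hθ0.le hθ1
  have hT : 1 / (4 * m : ℝ) ≤ T := by
    have h1 : 1 / 4 ≤ log n * log m / θ ^ 2 := by
      rw [le_div_iff₀ (by positivity)]; nlinarith
    calc 1 / (4 * m : ℝ) = 1 / 4 / m := by ring
      _ ≤ log n * log m / θ ^ 2 / m := by gcongr
      _ ≤ T := by
        rw [show log n * log m / θ ^ 2 / m = log n * log m / (m * θ ^ 2) by ring]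
        linarith [div_nonneg hlogδ (by positivity : (0 : ℝ) ≤ m)]
  have : 1 / (2 * m : ℝ) ≤ √T := by
    refine le_sqrt_of_sq_le (le_trans ?_ hT)
    rw [div_pow, one_pow, mul_pow, div_le_div_iff₀ (by positivity) (by positivity)]
    nlinarith
  calc 1 / (m : ℝ) = 2 * (1 / (2 * m)) := by field_simp
    _ ≤ 2 * √T := by gcongr

theorem sqrt_add_four_exp_le_ten_sqrt {n m k : ℕ} (hn : 2 ≤ n) (hm : 2 ≤ m) {θ δ : ℝ}
    (hθ0 : 0 < θ) (hθ1 : θ ≤ 1) (hδ0 : 0 < δ) (hδ1 : δ ≤ 1)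
    (hk : 2 * log m / θ ^ 2 ≤ k) (hk' : (k : ℝ) ≤ 2 * log m / θ ^ 2 + 1) :
    √((k * log n + log (1 / δ)) / (2 * m)) + 4 * exp (-k * θ ^ 2 / 2) ≤
      10 * √(log n * log m / (m * θ ^ 2) + log (1 / δ) / m) := by
  set T := log n * log m / (m * θ ^ 2) + log (1 / δ) / m
  have hm0 : (0 : ℝ) < m := by positivity
  have hlogm : log 2 ≤ log m := log_le_log (by norm_num) (by exact_mod_cast hm)
  have hlogn : 0 ≤ log n := log_nonneg (by exact_mod_cast (by omega : 1 ≤ n))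
  have hlogδ : 0 ≤ log (1 / δ) := log_nonneg (by rw [le_div_iff₀ hδ0]; linarith)
  have hθ2 : 0 < θ ^ 2 := by positivity
  have hk4 : (k : ℝ) ≤ 4 * log m / θ ^ 2 := by
    have : 1 ≤ 2 * log m / θ ^ 2 := by
      rw [le_div_iff₀ hθ2]; linarith [log_two_gt_d9, pow_le_one₀ (n := 2) hθ0.le hθ1]
    linarith [show 4 * log m / θ ^ 2 = 2 * (2 * log m / θ ^ 2) by ring]
  have hsample : √((k * log n + log (1 / δ)) / (2 * m)) ≤ 2 * √T := by
    have h1 : k * log n ≤ 4 * (log n * log m / θ ^ 2) := by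
      calc k * log n ≤ 4 * log m / θ ^ 2 * log n := by gcongr
        _ = _ := by ring
    have h4T : 2 ^ 2 * T * (2 * m) = 8 * (log n * log m / θ ^ 2) + 8 * log (1 / δ) := by
      simp only [T]; field_simp; ring
    have hpos : 0 ≤ log n * log m / θ ^ 2 := by positivity
    calc √((k * log n + log (1 / δ)) / (2 * m)) ≤ √(2 ^ 2 * T) := by
          refine sqrt_le_sqrt ?_
          rw [div_le_iff₀ (by positivity), h4T]
          linarith
      _ = 2 * √T := by rw [sqrt_mul (by norm_num), sqrt_sq (by norm_num)]
  have hexp : exp (-k * θ ^ 2 / 2) ≤ 1 / m := by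
    rw [one_div, ← exp_log hm0, ← exp_neg]
    refine exp_le_exp.mpr ?_
    have := (div_le_iff₀ hθ2).mp hk
    linarith
  linarith [one_div_le_two_mul_sqrt hn hm hθ0 hθ1 hδ0 hδ1]

theorem ofReal_one_sub_le_measure_of_compl_subset {Ω : Type*} [MeasurableSpace Ω]
    {μ : Measure Ω} [IsProbabilityMeasure μ] {s t : Set Ω} {δ : ℝ} (hδ : 0 ≤ δ)
    (hs : μ s ≤ ENNReal.ofReal δ) (hst : sᶜ ⊆ t) : ENNReal.ofReal (1 - δ) ≤ μ t :=
  calc ENNReal.ofReal (1 - δ) = μ univ - ENNReal.ofReal δ := by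
        rw [ENNReal.ofReal_sub _ hδ, ENNReal.ofReal_one, measure_univ]
    _ ≤ μ univ - μ s := tsub_le_tsub_left hs _
    _ ≤ μ sᶜ := by rw [compl_eq_univ_sdiff]; exact le_measure_sdiff
    _ ≤ μ t := measure_mono hst

/-- Finite-base-class margin generalization bound for voting classifiers: there is an
absolute constant `C > 0` such that, with probability at least `1 - δ` over an
i.i.d. sample `S` of size `m` from `D` (a probability measure on labeled points
`X × Fin 2`), simultaneously for every probability vector `α`, writing
`f x = ∑ i, α i * s i x`, the true probability of a nonpositive margin
`(y - τ) * (f x - τ) ≤ 0` is at most the empirical fraction of sample points with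
margin at most `θ` plus `C * √((log n * log m)/(m θ²) + log (1/δ)/m)`. -/
theorem adaGNN_voting_margin_generalization_bound :
    ∃ C : ℝ, 0 < C ∧
      ∀ (X : Type u) (_ : MeasurableSpace X) (n : ℕ), 2 ≤ n →
        ∀ s : Fin n → X → ℝ, (∀ i, Measurable (s i)) →
          (∀ i x, s i x ∈ Set.Icc (0 : ℝ) 1) →
        ∀ D : Measure (X × Fin 2), IsProbabilityMeasure D →
        ∀ τ θ δ : ℝ, τ ∈ Set.Ioo (0 : ℝ) 1 → θ ∈ Set.Ioo (0 : ℝ) 1 →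
          δ ∈ Set.Ioo (0 : ℝ) 1 →
        ∀ m : ℕ, 2 ≤ m →
        ENNReal.ofReal (1 - δ) ≤
          (Measure.pi fun _ : Fin m => D)
            {S : Fin m → X × Fin 2 |
              ∀ α : Fin n → ℝ, (∀ i, 0 ≤ α i) → (∑ i, α i = 1) →
                (D {p : X × Fin 2 |
                    (((p.2 : ℕ) : ℝ) - τ) * ((∑ i, α i * s i p.1) - τ) ≤ 0}).toReal ≤
                  (1 / (m : ℝ)) *
                      ((Finset.univ.filter fun j : Fin m =>
                          ((((S j).2 : ℕ) : ℝ) - τ) *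
                              ((∑ i, α i * s i (S j).1) - τ) ≤ θ).card : ℝ) +
                    C * Real.sqrt ((Real.log n * Real.log m) / (m * θ ^ 2) +
                        Real.log (1 / δ) / m)} := by
  refine ⟨10, by norm_num, fun X _ n hn s hs hs01 D _ τ θ δ hτ ⟨hθ0, hθ1⟩ ⟨hδ0, hδ1⟩ m hm => ?_⟩
  -- makes the sparsification error `4 e^{-kθ²/2}` at most `4 / m`
  set k := ⌈2 * log m / θ ^ 2⌉₊
  have hk : 0 < k := Nat.ceil_pos.mpr <| by
    have := log_pos (one_lt_two.trans_le (Nat.ofNat_le_cast.mpr hm)); positivity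
  have : NeZero n := ⟨by omega⟩
  set bad := {S : Fin m → X × Fin 2 | ∃ i : Fin k → Fin n,
    empiricalMeasure S {p | margin τ (sparseAverage s i) p ≤ θ / 2} +
      ENNReal.ofReal √((log (Fintype.card (Fin k → Fin n)) + log (1 / δ)) / (2 * m)) <
    D {p | margin τ (sparseAverage s i) p ≤ θ / 2}}
  have hbad : (Measure.pi fun _ : Fin m => D) bad ≤ ENNReal.ofReal δ :=
    measure_pi_exists_empiricalMeasure_add_sqrt_lt_le D
      (fun i => measurableSet_le (measurable_margin τ (measurable_sparseAverage hs i))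
        measurable_const) (by omega) hδ0 hδ1.le
  refine ofReal_one_sub_le_measure_of_compl_subset hδ0.le hbad fun S hS α hα0 hα1 => ?_
  simp only [bad, mem_compl_iff, mem_ofPred_eq, not_exists, not_lt] at hS
  refine (measureReal_margin_nonpos_le hs hs01 D (Ioo_subset_Icc_self hτ) hθ0.le
    (sqrt_nonneg _) hk S hS hα0 hα1).trans ?_
  have := sqrt_add_four_exp_le_ten_sqrt (k := k) hn hm hθ0 hθ1.le hδ0 hδ1.le
    (Nat.le_ceil _) (Nat.ceil_lt_add_one (by positivity)).le
  rw [Fintype.card_fun, Fintype.card_fin, Fintype.card_fin, Nat.cast_pow, log_pow, add_assoc]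
  exact add_le_add le_rfl this
end
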